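/- arXiv:2202.06243 — 5 statements merged into one kernel-verified Lean document; each statement's English description precedes it below -/
import Mathlib

section
/- Let E be a nontrivial finite-dimensional complex inner product space, let T : E → E be a symmetric linear operator, and let Φ ∈ E with ‖Φ‖ = 1. Then the following are equivalent: (i) for every linear operator V : E → E, the complex number ⟪VΦ, T(VΦ)⟫ − ⟪VΦ, V(TΦ)⟫ is real and nonnegative (the ground-state condition ω(V†[T,V]) ≥ 0 for the vector state ω(A) = ⟪Φ, AΦ⟫); (ii) TΦ = ⟪Φ, TΦ⟫ • Φ and Re⟪Φ, TΦ⟫ · ‖ψ‖² ≤ Re⟪ψ, Tψ⟫ for every ψ ∈ E, i.e. Φ is an eigenvector of T whose eigenvalue is the minimum of the Rayleigh quotient (Φ is a ground state of T). -/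
open scoped InnerProductSpace

/-- **Variational characterization of ground states (finite dimension).**
For a symmetric operator `T` and a unit vector `Φ`, the ground-state condition
`ω(V†[T,V]) ≥ 0` for all operators `V` (with `ω` the vector state of `Φ`) holds
iff `Φ` is an eigenvector of `T` whose eigenvalue minimizes the Rayleigh quotient. -/
theorem ground_state_condition_iff
    {E : Type*} [NormedAddCommGroup E] [InnerProductSpace ℂ E]
    [FiniteDimensional ℂ E] [Nontrivial E]
    (T : E →ₗ[ℂ] E) (hT : T.IsSymmetric) (Φ : E) (hΦ : ‖Φ‖ = 1) :
    (∀ V : E →ₗ[ℂ] E,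
        (⟪V Φ, T (V Φ)⟫_ℂ - ⟪V Φ, V (T Φ)⟫_ℂ).im = 0 ∧
        0 ≤ (⟪V Φ, T (V Φ)⟫_ℂ - ⟪V Φ, V (T Φ)⟫_ℂ).re)
      ↔ (T Φ = ⟪Φ, T Φ⟫_ℂ • Φ ∧
          ∀ ψ : E, (⟪Φ, T Φ⟫_ℂ).re * ‖ψ‖ ^ 2 ≤ (⟪ψ, T ψ⟫_ℂ).re) := by
  have hself_re : ∀ χ : E, (⟪χ, χ⟫_ℂ).re = ‖χ‖ ^ 2 := fun χ => by
    simp [inner_self_eq_norm_sq_to_K]; norm_cast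
  have hself_im : ∀ χ : E, (⟪χ, χ⟫_ℂ).im = 0 := fun χ => by
    simp [inner_self_eq_norm_sq_to_K]; norm_cast
  have hΦΦ : ⟪Φ, Φ⟫_ℂ = 1 := by
    have h1 := hself_re Φ
    have h2 := hself_im Φ
    rw [hΦ] at h1
    apply Complex.ext <;> simp [h1, h2, hΦ]
  -- the expectation value is real
  have hlam : (starRingEnd ℂ) ⟪Φ, T Φ⟫_ℂ = ⟪Φ, T Φ⟫_ℂ := by
    rw [inner_conj_symm]; exact hT Φ Φ
  have hlam_im : (⟪Φ, T Φ⟫_ℂ).im = 0 := by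
    have := congrArg Complex.im hlam
    simp only [Complex.conj_im] at this
    linarith
  constructor
  · intro h
    -- Rayleigh inequality from the rank-one operator `x ↦ ⟪Φ,x⟫ • ψ`
    have hray : ∀ ψ : E, (⟪Φ, T Φ⟫_ℂ).re * ‖ψ‖ ^ 2 ≤ (⟪ψ, T ψ⟫_ℂ).re := by
      intro ψ
      obtain ⟨_, hre⟩ := h ((innerₛₗ ℂ Φ).smulRight ψ)
      simp only [LinearMap.smulRight_apply, innerₛₗ_apply_apply, hΦΦ, one_smul,
        inner_smul_right, Complex.sub_re, Complex.mul_re, hself_re, hself_im,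
        mul_zero, sub_zero] at hre
      linarith
    refine ⟨?_, hray⟩
    -- eigenvector: consider ψ₀ = TΦ - λ•Φ, orthogonal to Φ
    set ψ₀ : E := T Φ - ⟪Φ, T Φ⟫_ℂ • Φ with hψ₀
    have h1 : ⟪Φ, ψ₀⟫_ℂ = 0 := by
      simp [hψ₀, inner_sub_right, inner_smul_right, hΦΦ, hΦ]
    have h2 : ⟪ψ₀, Φ⟫_ℂ = 0 := by
      rw [← inner_conj_symm, h1, map_zero]
    have h3 : ⟪ψ₀, T Φ⟫_ℂ = ⟪ψ₀, ψ₀⟫_ℂ := by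
      have hTΦ : T Φ = ψ₀ + ⟪Φ, T Φ⟫_ℂ • Φ := by simp [hψ₀]
      rw [hTΦ, inner_add_right, inner_smul_right, h2, mul_zero, add_zero]
    obtain ⟨_, hre⟩ := h ((innerₛₗ ℂ (Φ + ψ₀)).smulRight Φ)
    simp only [LinearMap.smulRight_apply, innerₛₗ_apply_apply, inner_add_left,
      hΦΦ, h2, add_zero, one_smul, h3, inner_smul_right, mul_one,
      Complex.sub_re, Complex.add_re, hself_re] at hre
    have hz : ψ₀ = 0 := by
      have hnn := sq_nonneg ‖ψ₀‖
      have hnorm : ‖ψ₀‖ = 0 := by nlinarith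
      simpa using hnorm
    rw [hψ₀, sub_eq_zero] at hz
    exact hz
  · rintro ⟨heig, hray⟩ V
    set ψ := V Φ with hψ
    have hVT : V (T Φ) = ⟪Φ, T Φ⟫_ℂ • ψ := by
      conv_lhs => rw [heig]
      rw [map_smul]
    rw [hVT, inner_smul_right]
    have him : (⟪ψ, T ψ⟫_ℂ).im = 0 := by
      have h : (starRingEnd ℂ) ⟪ψ, T ψ⟫_ℂ = ⟪ψ, T ψ⟫_ℂ := by
        rw [inner_conj_symm]; exact hT ψ ψ
      have := congrArg Complex.im h
      simp only [Complex.conj_im] at this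
      linarith
    constructor
    · simp [Complex.sub_im, Complex.mul_im, him, hlam_im, hself_re, hself_im, sq]
    · have := hray ψ
      simp only [Complex.sub_re, Complex.mul_re, hself_re, hself_im,
        mul_zero, sub_zero]
      linarith
end

section
/- Let A be a unital C*-algebra over ℂ, let ω : A → ℂ be a state (ω is linear, ω(1) = 1, and ω(a* a) is a nonnegative real number for every a ∈ A), and let h ∈ A be self-adjoint. Assume the ground-state condition: ω(v*·(h·v − v·h)) is a nonnegative real number for every v ∈ A. Then for every unitary element u ∈ A, the number ω(u*·(h·u − u·h)) is a nonnegative real number and satisfies ω(u*·(h·u − u·h)) ≤ ‖u*·h·u + u·h·u* − 2h‖, i.e. the energy increase caused by a unitary perturbation of a ground state is bounded above by the norm of the double commutator [u*, [h, u]] = u*·h·u + u·h·u* − 2h. -/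
/-- A state applied to a self-adjoint element is bounded above (in real part)
by the norm of the element. -/
lemma state_re_le_norm
    {A : Type*} [NormedRing A] [StarRing A] [CStarRing A]
    [NormedAlgebra ℂ A] [CompleteSpace A] [StarModule ℂ A]
    (ω : A →ₗ[ℂ] ℂ)
    (hω_one : ω 1 = 1)
    (hω_pos : ∀ a : A, (ω (star a * a)).im = 0 ∧ 0 ≤ (ω (star a * a)).re)
    (D : A) (hD : IsSelfAdjoint D) : (ω D).re ≤ ‖D‖ := by
  letI : CStarAlgebra A := {}
  letI := CStarAlgebra.spectralOrder A
  haveI := CStarAlgebra.spectralOrderedRing A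
  have hx : (0 : A) ≤ algebraMap ℝ A ‖D‖ - D := by
    rw [sub_nonneg]
    exact hD.le_algebraMap_norm_self
  set x : A := algebraMap ℝ A ‖D‖ - D with hxdef
  have hs : star (CFC.sqrt x) * CFC.sqrt x = x := by
    have h1 : IsSelfAdjoint (CFC.sqrt x) := (CFC.sqrt_nonneg (a := x)).isSelfAdjoint
    rw [h1.star_eq]
    exact CFC.sqrt_mul_sqrt_self x hx
  have hpos := hω_pos (CFC.sqrt x)
  rw [hs] at hpos
  have hωx : ω x = (‖D‖ : ℂ) - ω D := by
    have : algebraMap ℝ A ‖D‖ = (‖D‖ : ℂ) • (1 : A) := by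
      rw [Algebra.algebraMap_eq_smul_one, ← algebraMap_smul ℂ (‖D‖ : ℝ) (1 : A)]
      norm_num
    rw [hxdef, map_sub, this, map_smul, hω_one, smul_eq_mul, mul_one]
  rw [hωx] at hpos
  have := hpos.2
  simp only [Complex.sub_re, Complex.ofReal_re] at this
  linarith

/-- **Variational estimate for a unitary perturbation of a ground state.**
If the state `ω` satisfies the ground-state condition for the self-adjoint `h`,
then for every unitary `u` the energy increase `ω(u*[h,u])` is a nonnegative real
number bounded by the norm of the double commutator `[u*,[h,u]]`. -/
theorem unitary_perturbation_energy_bound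
    {A : Type*} [NormedRing A] [StarRing A] [CStarRing A]
    [NormedAlgebra ℂ A] [CompleteSpace A] [StarModule ℂ A]
    (ω : A →ₗ[ℂ] ℂ)
    (hω_one : ω 1 = 1)
    (hω_pos : ∀ a : A, (ω (star a * a)).im = 0 ∧ 0 ≤ (ω (star a * a)).re)
    (h : A) (hh : IsSelfAdjoint h)
    (hgs : ∀ v : A, (ω (star v * (h * v - v * h))).im = 0 ∧
        0 ≤ (ω (star v * (h * v - v * h))).re) :
    ∀ u : A, u ∈ unitary A →
      (ω (star u * (h * u - u * h))).im = 0 ∧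
      0 ≤ (ω (star u * (h * u - u * h))).re ∧
      (ω (star u * (h * u - u * h))).re
        ≤ ‖star u * h * u + u * h * star u - 2 • h‖ := by
  intro u hu
  obtain ⟨h1, h2⟩ := Unitary.mem_iff.mp hu
  refine ⟨(hgs u).1, (hgs u).2, ?_⟩
  set D : A := star u * h * u + u * h * star u - 2 • h with hDdef
  have hD : IsSelfAdjoint D := by
    simp only [hDdef, IsSelfAdjoint, star_sub, star_add, star_mul, star_star, star_smul,
      hh.star_eq]
    rw [mul_assoc, mul_assoc]
    ring_nf
    simp
  have key : ω D = ω (star u * (h * u - u * h)) + ω (star (star u) * (h * star u - star u * h)) := by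
    rw [← map_add]
    congr 1
    have e1 : star u * (h * u - u * h) = star u * h * u - star u * u * h := by
      rw [mul_sub]; simp [mul_assoc]
    have e2 : star (star u) * (h * star u - star u * h) = u * h * star u - u * star u * h := by
      rw [star_star, mul_sub]; simp [mul_assoc]
    rw [e1, e2, h1, h2, hDdef, two_smul]
    simp only [one_mul]
    abel
  have hF := hgs (star u)
  have hE := hgs u
  have hle : (ω (star u * (h * u - u * h))).re ≤ (ω D).re := by
    rw [key, Complex.add_re]
    linarith [hF.2]
  exact hle.trans (state_re_le_norm ω hω_one hω_pos D hD)
end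

section
/- Let A be a unital C*-algebra over ℂ, let ω : A → ℂ be a state, let h ∈ A be self-adjoint, and let γ > 0 be real. Assume (i) the ground-state condition: ω(v*·(h·v − v·h)) is a nonnegative real number for every v ∈ A, and (ii) the gap condition: for every v ∈ A with ω(v) = 0, ω(v*·(h·v − v·h)) is a real number and γ·Re ω(v*·v) ≤ Re ω(v*·(h·v − v·h)). Then for every unitary element u ∈ A, γ·(1 − ‖ω(u)‖²) ≤ Re ω(u*·(h·u − u·h)); in particular, if the energy increase Re ω(u*·(h·u − u·h)) is small compared with the gap γ, then the overlap |ω(u)| is close to 1. -/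
open Complex ComplexConjugate

/-- **Overlap bound for a gapped ground state.**
If `ω` is a locally-unique gapped ground state with gap `γ` of the self-adjoint
`h`, then every unitary `u` satisfies `γ·(1 − |ω(u)|²) ≤ Re ω(u*[h,u])`. -/
theorem gapped_ground_state_overlap_bound
    {A : Type*} [NormedRing A] [StarRing A] [CStarRing A]
    [NormedAlgebra ℂ A] [CompleteSpace A] [StarModule ℂ A]
    (ω : A →ₗ[ℂ] ℂ)
    (hω_one : ω 1 = 1)
    (hω_pos : ∀ a : A, (ω (star a * a)).im = 0 ∧ 0 ≤ (ω (star a * a)).re)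
    (h : A) (hh : IsSelfAdjoint h) (γ : ℝ) (hγ : 0 < γ)
    (hgs : ∀ v : A, (ω (star v * (h * v - v * h))).im = 0 ∧
        0 ≤ (ω (star v * (h * v - v * h))).re)
    (hgap : ∀ v : A, ω v = 0 →
        (ω (star v * (h * v - v * h))).im = 0 ∧
        γ * (ω (star v * v)).re ≤ (ω (star v * (h * v - v * h))).re) :
    ∀ u : A, u ∈ unitary A →
      γ * (1 - ‖ω u‖ ^ 2) ≤ (ω (star u * (h * u - u * h))).re := by
  -- Hermiticity of the state: ω(star x) = conj (ω x)
  have herm : ∀ x : A, ω (star x) = conj (ω x) := by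
    intro x
    have hx := (hω_pos x).1
    have e1 : star (x + 1) * (x + 1) = star x * x + star x + x + 1 := by
      simp only [star_add, star_one]; noncomm_ring
    have e2 : star (x + Complex.I • 1) * (x + Complex.I • 1)
        = star x * x + Complex.I • star x + (-Complex.I) • x + 1 := by
      simp only [star_add, star_smul, star_one, Complex.star_def, Complex.conj_I,
        add_mul, mul_add, smul_mul_assoc, mul_smul_comm, mul_one, one_mul]
      match_scalars <;> simp [Complex.I_sq] <;> ring
    have h1 := (hω_pos (x + 1)).1
    have h2 := (hω_pos (x + Complex.I • 1)).1
    rw [e1] at h1; rw [e2] at h2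
    simp only [map_add, map_smul, hω_one, Complex.add_im, smul_eq_mul,
      Complex.mul_im, Complex.I_re, Complex.I_im, Complex.neg_im, Complex.neg_re,
      Complex.one_im, hx] at h1 h2
    apply Complex.ext <;>
      simp only [Complex.conj_re, Complex.conj_im] <;> linarith
  intro u hu
  have hu1 : star u * u = 1 := hu.1
  set c := ω u with hc
  set k := h * u - u * h with hk
  -- ω(k) = 0
  have hz : ω k = 0 := by
    set z := ω k with hzdef
    by_contra hne
    have him := (hgs (u + (-(Complex.I * z)) • 1)).1
    have himu := (hgs u).1
    have e3 : star (u + (-(Complex.I * z)) • 1) *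
        (h * (u + (-(Complex.I * z)) • 1) - (u + (-(Complex.I * z)) • 1) * h)
        = star u * k + (Complex.I * conj z) • k := by
      have hcomm : h * (u + (-(Complex.I * z)) • 1) - (u + (-(Complex.I * z)) • 1) * h = k := by
        rw [mul_add, add_mul, smul_mul_assoc, mul_smul_comm, mul_one, one_mul, hk]
        abel
      rw [hcomm, star_add, star_smul, star_one, add_mul, smul_mul_assoc, one_mul]
      congr 2
      simp [Complex.ext_iff]
    rw [e3, map_add, map_smul] at him
    simp only [smul_eq_mul, Complex.add_im, ← hk, himu, zero_add] at him
    rw [← hzdef] at him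
    have heq : (Complex.I * conj z * z).im = Complex.normSq z := by
      rw [mul_assoc, mul_comm (conj z) z, Complex.mul_conj]
      simp
    rw [heq] at him
    have him2 : (ω (star u * k)).im = 0 := himu
    exact hne (Complex.normSq_eq_zero.mp (by linarith))
  -- apply the gap to v = u - c•1
  have hv0 : ω (u - c • 1) = 0 := by
    simp [map_sub, map_smul, hω_one, hc]
  have hgap' := (hgap (u - c • 1) hv0).2
  have e4 : star (u - c • 1) * (u - c • 1)
      = star u * u - c • star u - (conj c) • u + (c * conj c) • 1 := by
    simp only [star_sub, star_smul, star_one, Complex.star_def, sub_mul, mul_sub,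
      smul_mul_assoc, mul_smul_comm, mul_one, one_mul]
    match_scalars <;> ring
  have e5 : star (u - c • 1) * (h * (u - c • 1) - (u - c • 1) * h)
      = star u * k - (conj c) • k := by
    have hcomm : h * (u - c • 1) - (u - c • 1) * h = k := by
      rw [mul_sub, sub_mul, smul_mul_assoc, mul_smul_comm, mul_one, one_mul, hk]
      abel
    rw [hcomm, star_sub, star_smul, star_one, Complex.star_def, sub_mul,
      smul_mul_assoc, one_mul]
  rw [e4, e5] at hgap'
  have hstarU : ω (star u) = conj c := herm u
  have lhs : (ω (star u * u - c • star u - (conj c) • u + (c * conj c) • 1)).re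
      = 1 - ‖c‖ ^ 2 := by
    rw [map_add, map_sub, map_sub, map_smul, map_smul, map_smul, hu1, hω_one,
      hstarU, smul_eq_mul, smul_eq_mul, smul_eq_mul, mul_one]
    rw [mul_comm (conj c) c, Complex.mul_conj]
    simp [Complex.sub_re, Complex.add_re, Complex.ofReal_re, Complex.one_re,
      Complex.normSq_eq_norm_sq, ← Complex.ofReal_pow]
  have rhs : ω (star u * k - (conj c) • k) = ω (star u * k) := by
    rw [map_sub, map_smul, hz, smul_zero, sub_zero]
  rw [lhs, rhs] at hgap'
  rw [hk] at hgap' ⊢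
  exact hgap'
end

section
/- Let A be a unital C*-algebra over ℂ, let ω : A → ℂ be a state, and let h ∈ A be self-adjoint. Assume the ground-state condition: ω(v*·(h·v − v·h)) is a nonnegative real number for every v ∈ A. Then ω vanishes on all commutators with h: ω(h·a − a·h) = 0 for every a ∈ A. -/
/-- **A ground state vanishes on commutators with the Hamiltonian.**
If the state `ω` satisfies the ground-state condition for the self-adjoint `h`,
then `ω([h,a]) = 0` for every `a`. -/
theorem ground_state_vanishes_on_commutators
    {A : Type*} [NormedRing A] [StarRing A] [CStarRing A]
    [NormedAlgebra ℂ A] [CompleteSpace A] [StarModule ℂ A]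
    (ω : A →ₗ[ℂ] ℂ)
    (hω_one : ω 1 = 1)
    (hω_pos : ∀ a : A, (ω (star a * a)).im = 0 ∧ 0 ≤ (ω (star a * a)).re)
    (h : A) (hh : IsSelfAdjoint h)
    (hgs : ∀ v : A, (ω (star v * (h * v - v * h))).im = 0 ∧
        0 ≤ (ω (star v * (h * v - v * h))).re) :
    ∀ a : A, ω (h * a - a * h) = 0 := by
  -- values on `star v * v` are real
  have hreal : ∀ v : A, (starRingEnd ℂ) (ω (star v * v)) = ω (star v * v) := by
    intro v
    exact Complex.conj_eq_iff_im.mpr (hω_pos v).1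
  -- polarization identity
  have hpol : ∀ a : A, (4:ℂ) • a =
      star (a+1) * (a+1) + Complex.I • (star (a + Complex.I • 1) * (a + Complex.I • 1))
      - star (a-1)*(a-1) - Complex.I • (star (a - Complex.I • 1) * (a - Complex.I • 1)) := by
    intro a
    simp only [star_add, star_sub, star_one, star_smul, Complex.star_def, Complex.conj_I,
      mul_add, add_mul, mul_sub, sub_mul, smul_add, smul_sub, smul_smul, smul_mul_assoc,
      mul_smul_comm, Complex.I_mul_I, neg_smul, one_smul, neg_neg, mul_one, one_mul,
      neg_mul, mul_neg]
    abel_nf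
    match_scalars <;> simp [Complex.I_sq] <;> ring
  -- ω is star-preserving
  have hstar : ∀ a : A, ω (star a) = (starRingEnd ℂ) (ω a) := by
    intro a
    have h1 := hpol a
    have h2 : (4:ℂ) • star a =
        star (a+1) * (a+1) - Complex.I • (star (a + Complex.I • 1) * (a + Complex.I • 1))
        - star (a-1)*(a-1) + Complex.I • (star (a - Complex.I • 1) * (a - Complex.I • 1)) := by
      have := congrArg (star : A → A) h1
      simpa [star_smul, star_sub, star_add, star_mul, Complex.star_def, Complex.conj_I,
        mul_assoc, neg_smul, sub_eq_add_neg, add_comm, add_left_comm, add_assoc] using this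
    have e1 := congrArg ω h1
    have e2 := congrArg ω h2
    simp only [map_smul, map_add, map_sub, LinearMap.map_smul] at e1 e2
    have c1 := hreal (a+1)
    have c2 := hreal (a + Complex.I • 1)
    have c3 := hreal (a-1)
    have c4 := hreal (a - Complex.I • 1)
    have e1c := congrArg (starRingEnd ℂ) e1
    simp only [map_smul, map_add, map_sub, map_mul, Complex.conj_I, smul_eq_mul,
      Complex.conj_ofNat, c1, c2, c3, c4] at e1c e2 ⊢
    have : (4:ℂ) * ω (star a) = 4 * (starRingEnd ℂ) (ω a) := by
      linear_combination e2 - e1c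
    have h4 : (4:ℂ) ≠ 0 := by norm_num
    exact mul_left_cancel₀ h4 this
  -- ω vanishes on commutators with star v * v
  have hcomm : ∀ v : A, ω (h * (star v * v) - (star v * v) * h) = 0 := by
    intro v
    have hid : h * (star v * v) - (star v * v) * h =
        star v * (h * v - v * h) - star (star v * (h * v - v * h)) := by
      simp only [star_mul, star_sub, star_star, hh.star_eq]
      noncomm_ring
    rw [hid, map_sub, hstar]
    rw [Complex.conj_eq_iff_im.mpr (hgs v).1]
    ring
  intro a
  have key : (4:ℂ) • (h * a - a * h) =
      (h * (star (a+1) * (a+1)) - (star (a+1) * (a+1)) * h)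
      + Complex.I • (h * (star (a + Complex.I • 1) * (a + Complex.I • 1))
          - (star (a + Complex.I • 1) * (a + Complex.I • 1)) * h)
      - (h * (star (a-1) * (a-1)) - (star (a-1) * (a-1)) * h)
      - Complex.I • (h * (star (a - Complex.I • 1) * (a - Complex.I • 1))
          - (star (a - Complex.I • 1) * (a - Complex.I • 1)) * h) := by
    have e : (4:ℂ) • (h * a - a * h) = h * ((4:ℂ) • a) - ((4:ℂ) • a) * h := by
      simp [mul_smul_comm, smul_mul_assoc, smul_sub]
    rw [e, hpol a]
    simp only [mul_add, add_mul, mul_sub, sub_mul, mul_smul_comm, smul_mul_assoc, smul_sub]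
    abel
  have e := congrArg ω key
  simp only [map_smul, map_add, map_sub, hcomm (a+1), hcomm (a + Complex.I • 1),
    hcomm (a-1), hcomm (a - Complex.I • 1), smul_eq_mul, mul_zero, add_zero, sub_zero,
    zero_add] at e
  have h4 : (4:ℂ) ≠ 0 := by norm_num
  have := (mul_eq_zero.mp e).resolve_left h4
  simpa [map_sub] using this
end

section
/- Let A be a unital C*-algebra over ℂ, let ω : A → ℂ be a state, let ν ∈ A be self-adjoint, let u ∈ A be unitary, and let θ, ν₀ ∈ ℝ. Then ‖ω(exp(iθν)·u) − e^{iθν₀}·ω(u)‖² ≤ θ² · Re ω((ν − ν₀·1)²), where exp(iθν) denotes the exponential (given by the convergent power series in A) of the element i·θ·ν, and e^{iθν₀} ∈ ℂ is the complex exponential. -/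
open NormedSpace

lemma state_herm {A : Type*} [NormedRing A] [StarRing A]
    [NormedAlgebra ℂ A] [StarModule ℂ A]
    (ω : A →ₗ[ℂ] ℂ)
    (hω_pos : ∀ a : A, (ω (star a * a)).im = 0 ∧ 0 ≤ (ω (star a * a)).re)
    (x y : A) : ω (star y * x) = starRingEnd ℂ (ω (star x * y)) := by
  have expand : ∀ c : ℂ, ω (star (c • x + y) * (c • x + y)) =
      (starRingEnd ℂ c) * c * ω (star x * x) + (starRingEnd ℂ c) * ω (star x * y)
        + c * ω (star y * x) + ω (star y * y) := by
    intro c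
    have h : star (c • x + y) * (c • x + y) =
        ((starRingEnd ℂ c) * c) • (star x * x) + (starRingEnd ℂ c) • (star x * y)
          + c • (star y * x) + star y * y := by
      simp only [star_add, star_smul, Complex.star_def, add_mul, mul_add,
        smul_mul_assoc, mul_smul_comm]
      module
    rw [h]
    simp [smul_eq_mul]
  have h1 := (hω_pos ((1 : ℂ) • x + y)).1
  have h2 := (hω_pos ((Complex.I : ℂ) • x + y)).1
  rw [expand 1] at h1
  rw [expand Complex.I] at h2
  have hxx := (hω_pos x).1
  have hyy := (hω_pos y).1
  simp only [map_one, one_mul, mul_one, Complex.add_im, Complex.mul_im,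
    Complex.conj_I, Complex.I_re, Complex.I_im, Complex.neg_re, Complex.neg_im,
    Complex.mul_re] at h1 h2
  apply Complex.ext <;> simp only [Complex.conj_re, Complex.conj_im] <;> linarith

lemma state_cs {A : Type*} [NormedRing A] [StarRing A]
    [NormedAlgebra ℂ A] [StarModule ℂ A]
    (ω : A →ₗ[ℂ] ℂ)
    (hω_pos : ∀ a : A, (ω (star a * a)).im = 0 ∧ 0 ≤ (ω (star a * a)).re)
    (x y : A) : ‖ω (star x * y)‖ ^ 2 ≤ (ω (star x * x)).re * (ω (star y * y)).re := by
  set z := ω (star x * y) with hz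
  set px := (ω (star x * x)).re with hpx
  set py := (ω (star y * y)).re with hpy
  have hxx := hω_pos x
  have hyy := hω_pos y
  have hherm := state_herm ω hω_pos x y
  have key : ∀ t : ℝ, 0 ≤ t ^ 2 * Complex.normSq z * px - 2 * t * Complex.normSq z + py := by
    intro t
    have expand : star ((-(t : ℂ) * z) • x + y) * ((-(t : ℂ) * z) • x + y) =
        ((starRingEnd ℂ (-(t : ℂ) * z)) * (-(t : ℂ) * z)) • (star x * x)
          + (starRingEnd ℂ (-(t : ℂ) * z)) • (star x * y)
          + (-(t : ℂ) * z) • (star y * x) + star y * y := by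
      simp only [star_add, star_smul, Complex.star_def, add_mul, mul_add,
        smul_mul_assoc, mul_smul_comm]
      module
    have h := (hω_pos ((-(t : ℂ) * z) • x + y)).2
    rw [expand] at h
    simp only [map_add, map_smul, smul_eq_mul] at h
    rw [hherm] at h
    have hzz : ((Complex.normSq z : ℝ) : ℂ) = (starRingEnd ℂ) z * z :=
      Complex.normSq_eq_conj_mul_self
    have e1 : (starRingEnd ℂ (-(t : ℂ) * z)) * (-(t : ℂ) * z) =
        ((t ^ 2 * Complex.normSq z : ℝ) : ℂ) := by
      push_cast
      rw [hzz]
      simp only [map_mul, map_neg, Complex.conj_ofReal]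
      ring
    have e2 : (starRingEnd ℂ (-(t : ℂ) * z)) * z = ((-(t * Complex.normSq z) : ℝ) : ℂ) := by
      push_cast
      rw [hzz]
      simp only [map_mul, map_neg, Complex.conj_ofReal]
      ring
    have e3 : (-(t : ℂ) * z) * starRingEnd ℂ z = ((-(t * Complex.normSq z) : ℝ) : ℂ) := by
      push_cast
      rw [hzz]
      ring
    rw [e1, e2, e3] at h
    have hre : ((((t ^ 2 * Complex.normSq z : ℝ) : ℂ)) * ω (star x * x)
        + ((-(t * Complex.normSq z) : ℝ) : ℂ) + ((-(t * Complex.normSq z) : ℝ) : ℂ)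
        + ω (star y * y)).re
        = t ^ 2 * Complex.normSq z * px - 2 * t * Complex.normSq z + py := by
      simp only [Complex.add_re, Complex.ofReal_re, Complex.re_ofReal_mul]
      ring
    rw [hre] at h
    exact h
  have hnz : ‖z‖ ^ 2 = Complex.normSq z := by
    rw [Complex.sq_norm]
  rw [hnz]
  rcases eq_or_lt_of_le (Complex.normSq_nonneg z) with hz0 | hz0
  · rw [← hz0]
    exact mul_nonneg hxx.2 hyy.2
  · rcases eq_or_lt_of_le hxx.2 with hpx0 | hpx0
    · exfalso
      have hthis := key ((py + 1) / (2 * Complex.normSq z))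
      have hpx0' : px = 0 := by rw [hpx, ← hpx0]
      have ht : 2 * ((py + 1) / (2 * Complex.normSq z)) * Complex.normSq z = py + 1 := by
        field_simp
      rw [hpx0'] at hthis
      simp only [mul_zero, zero_sub] at hthis
      linarith
    · have hpx' : (0 : ℝ) < px := by rw [hpx]; exact hpx0
      have hthis := key (1 / px)
      have e : (1 / px) ^ 2 * Complex.normSq z * px - 2 * (1 / px) * Complex.normSq z + py
          = py - Complex.normSq z / px := by
        field_simp
        ring
      rw [e] at hthis
      have h4 : Complex.normSq z / px ≤ py := by linarith
      have h5 := (div_le_iff₀ hpx').mp h4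
      nlinarith

/-- **Replacing the density operator by its expectation value inside an exponential.**
For a state `ω`, a self-adjoint `ν`, a unitary `u`, and reals `θ, ν₀`,
`|ω(e^{iθν} u) − e^{iθν₀} ω(u)|² ≤ θ²·Re ω((ν − ν₀·1)²)`. -/
theorem exp_twist_expectation_bound
    {A : Type*} [NormedRing A] [StarRing A] [CStarRing A]
    [NormedAlgebra ℂ A] [CompleteSpace A] [StarModule ℂ A]
    (ω : A →ₗ[ℂ] ℂ)
    (hω_one : ω 1 = 1)
    (hω_pos : ∀ a : A, (ω (star a * a)).im = 0 ∧ 0 ≤ (ω (star a * a)).re)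
    (ν : A) (hν : IsSelfAdjoint ν)
    (u : A) (hu : u ∈ unitary A)
    (θ ν₀ : ℝ) :
    ‖ω (NormedSpace.exp ((Complex.I * θ) • ν) * u)
        - Complex.exp (Complex.I * θ * ν₀) * ω u‖ ^ 2
      ≤ θ ^ 2 * (ω ((ν - ν₀ • 1) ^ 2)).re := by
  letI : CStarAlgebra A :=
    { ‹NormedRing A›, ‹StarRing A›, ‹CompleteSpace A›, ‹CStarRing A›,
      ‹NormedAlgebra ℂ A›, ‹StarModule ℂ A› with }
  let +nondep : NormedAlgebra ℚ A := .restrictScalars ℚ ℂ A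
  set m : A := ν - ν₀ • 1 with hm_def
  have h01 : (ν₀ • (1 : A)) = ((ν₀ : ℂ)) • (1 : A) := (algebraMap_smul ℂ ν₀ (1 : A)).symm
  have hm_sa : IsSelfAdjoint m := by
    rw [hm_def, h01]
    exact hν.sub (by simp [IsSelfAdjoint, star_smul, Complex.star_def, Complex.conj_ofReal])
  have hm_norm : IsStarNormal m := hm_sa.isStarNormal
  set b : A := NormedSpace.exp ((Complex.I * θ) • m) with hb_def
  have hstar_arg : star ((Complex.I * θ) • m) = -((Complex.I * θ) • m) := by
    rw [star_smul, hm_sa.star_eq, ← neg_smul]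
    congr 1
    simp [Complex.star_def, map_mul, Complex.conj_I, Complex.conj_ofReal]
  have hbstar : star b = NormedSpace.exp (-((Complex.I * θ) • m)) := by
    rw [hb_def, NormedSpace.star_exp, hstar_arg]
  have hbb : b * star b = 1 := by
    rw [hbstar, hb_def, ← NormedSpace.exp_add_of_commute (Commute.neg_right (Commute.refl _)),
      add_neg_cancel, NormedSpace.exp_zero]
  -- split the exponential
  have hsplit : NormedSpace.exp ((Complex.I * θ) • ν)
      = Complex.exp (Complex.I * θ * ν₀) • b := by
    have hν_eq : (Complex.I * θ) • ν = (Complex.I * θ * ν₀) • (1 : A) + (Complex.I * θ) • m := by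
      rw [hm_def, h01, smul_sub, smul_smul]
      module
    have hcomm : Commute ((Complex.I * θ * ν₀) • (1 : A)) ((Complex.I * θ) • m) :=
      ((Commute.one_left _).smul_left _).smul_right _
    rw [hν_eq, NormedSpace.exp_add_of_commute hcomm]
    have h1 : NormedSpace.exp ((Complex.I * θ * ν₀) • (1 : A))
        = Complex.exp (Complex.I * θ * ν₀) • (1 : A) := by
      rw [← Algebra.algebraMap_eq_smul_one, ← algebraMap_exp_comm, Complex.exp_eq_exp_ℂ,
        Algebra.algebraMap_eq_smul_one]
    rw [h1, smul_mul_assoc, one_mul, hb_def]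
  -- reduce LHS
  have hlhs : ω (NormedSpace.exp ((Complex.I * θ) • ν) * u)
      - Complex.exp (Complex.I * θ * ν₀) * ω u
      = Complex.exp (Complex.I * θ * ν₀) * ω ((b - 1) * u) := by
    rw [hsplit, smul_mul_assoc, map_smul, smul_eq_mul, sub_mul, one_mul, map_sub, mul_sub]
  have habs : ‖Complex.exp (Complex.I * θ * ν₀)‖ = 1 := by
    rw [Complex.norm_exp]
    have : (Complex.I * θ * ν₀).re = 0 := by
      simp [Complex.mul_re, Complex.mul_im]
    rw [this, Real.exp_zero]
  rw [hlhs, norm_mul, habs, one_mul]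
  -- Cauchy–Schwarz
  have hcs := state_cs ω hω_pos (star (b - 1)) u
  rw [star_star] at hcs
  have huu : star u * u = 1 := (Unitary.mem_iff.mp hu).1
  rw [huu, hω_one] at hcs
  simp only [Complex.one_re, mul_one] at hcs
  refine hcs.trans ?_
  -- identify (b-1) * star (b-1) with a cfc element
  have hb_cfc : b = cfc (fun z : ℂ => Complex.exp (Complex.I * θ * z)) m := by
    have h1 : cfc (fun z : ℂ => Complex.I * θ * z) m = (Complex.I * θ) • m := by
      rw [← cfc_const_mul_id (Complex.I * θ) m]
    have h2 : cfc (fun z : ℂ => Complex.exp (Complex.I * θ * z)) m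
        = cfc (Complex.exp ∘ fun z : ℂ => Complex.I * θ * z) m := rfl
    have hnorm2 : IsStarNormal ((Complex.I * (θ : ℂ)) • m) :=
      ⟨by rw [hstar_arg]; exact (Commute.refl _).neg_left⟩
    rw [h2, cfc_comp Complex.exp (fun z : ℂ => Complex.I * θ * z) m, h1,
      CFC.complex_exp_eq_normedSpace_exp hnorm2]
  have hreal : ∀ z ∈ spectrum ℂ m, ((z.re : ℝ) : ℂ) = z := fun z hz =>
    hm_sa.spectrumRestricts.rightInvOn hz
  have hprod : (b - 1) * star (b - 1) = cfc (fun x : ℝ => 2 - 2 * Real.cos (θ * x)) m := by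
    have hexp : (b - 1) * star (b - 1) = (1 + 1) - b - star b := by
      have : (b - 1) * star (b - 1) = b * star b - b - star b + 1 := by
        rw [star_sub, star_one]
        noncomm_ring
      rw [this, hbb]
      abel
    rw [hexp, hb_cfc, ← cfc_star (fun z : ℂ => Complex.exp (Complex.I * θ * z)) m]
    have hc2 : ((1 : A) + 1) = cfc (fun _ : ℂ => (2 : ℂ)) m := by
      rw [cfc_const (2 : ℂ) m]
      norm_num
      exact (map_ofNat (algebraMap ℂ A) 2).symm
    rw [hc2, ← cfc_sub _ _ m, ← cfc_sub _ _ m]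
    rw [cfc_real_eq_complex (fun x : ℝ => 2 - 2 * Real.cos (θ * x)) hm_sa]
    apply cfc_congr
    intro z hz
    obtain ⟨x, hx⟩ : ∃ x : ℝ, (x : ℂ) = z := ⟨z.re, hreal z hz⟩
    simp only [← hx, Complex.star_def, Complex.ofReal_re]
    have harg : Complex.I * θ * (x : ℂ) = ((θ * x : ℝ) : ℂ) * Complex.I := by
      push_cast; ring
    rw [harg]
    have hconj : (starRingEnd ℂ) (Complex.exp (((θ * x : ℝ) : ℂ) * Complex.I))
        = Complex.exp (-((θ * x : ℝ) : ℂ) * Complex.I) := by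
      rw [← Complex.exp_conj]
      congr 1
      simp [Complex.conj_ofReal]
    rw [hconj]
    have h2c := Complex.two_cos (x := ((θ * x : ℝ) : ℂ))
    push_cast [Complex.ofReal_cos] at h2c ⊢
    linear_combination h2c
  rw [hprod]
  -- the positive remainder
  set g : ℝ → ℝ := fun x => θ ^ 2 * x ^ 2 - (2 - 2 * Real.cos (θ * x)) with hg_def
  have hg_nonneg : ∀ x : ℝ, 0 ≤ g x := by
    intro x
    have h1 : Real.sin (θ * x / 2) ^ 2 ≤ (θ * x / 2) ^ 2 := Real.sin_sq_le_sq
    have h2 : Real.cos (θ * x) = 1 - 2 * Real.sin (θ * x / 2) ^ 2 := by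
      have h3 := Real.sin_sq_eq_half_sub (x := θ * x / 2)
      rw [show 2 * (θ * x / 2) = θ * x by ring] at h3
      linarith
    rw [hg_def]
    simp only
    nlinarith
  have hd_pos : ∃ c : A, star c * c =
      θ ^ 2 • m ^ 2 - cfc (fun x : ℝ => 2 - 2 * Real.cos (θ * x)) m := by
    refine ⟨cfc (fun x : ℝ => Real.sqrt (g x)) m, ?_⟩
    have hsa : IsSelfAdjoint (cfc (fun x : ℝ => Real.sqrt (g x)) m) := cfc_predicate _ m
    rw [hsa.star_eq, ← cfc_mul (fun x : ℝ => Real.sqrt (g x)) (fun x : ℝ => Real.sqrt (g x)) m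
      (by rw [hg_def]; fun_prop) (by rw [hg_def]; fun_prop)]
    have hmul : cfc (fun x : ℝ => Real.sqrt (g x) * Real.sqrt (g x)) m = cfc g m := by
      apply cfc_congr
      intro x _
      exact Real.mul_self_sqrt (hg_nonneg x)
    rw [hmul, hg_def]
    rw [cfc_sub (fun x : ℝ => θ ^ 2 * x ^ 2) (fun x : ℝ => 2 - 2 * Real.cos (θ * x)) m
      (by fun_prop) (by fun_prop)]
    congr 1
    rw [cfc_const_mul (θ ^ 2) (fun x : ℝ => x ^ 2) m, cfc_pow_id m 2]
  obtain ⟨c, hc⟩ := hd_pos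
  have hpos := hω_pos c
  rw [hc] at hpos
  have hsmul : ω (θ ^ 2 • m ^ 2) = ((θ ^ 2 : ℝ) : ℂ) * ω (m ^ 2) := by
    rw [← algebraMap_smul ℂ (θ ^ 2) (m ^ 2), map_smul, smul_eq_mul]
    norm_num
  rw [map_sub, hsmul] at hpos
  have := hpos.2
  rw [Complex.sub_re, Complex.re_ofReal_mul] at this
  linarith
end
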